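/- Consider the eight pairwise distinct {0,1}-vectors in Fin 8 → Fin 7 → ℕ whose supports are: v1 = {1,2}, v2 = {1,3}, v3 = {2,4}, v4 = {3,4}, v5 = {4,5}, v6 = {4,6}, v7 = {5,7}, v8 = {6,7}; each vector has exactly two entries equal to 1, the supports are pairwise distinct, and the simple graph on Fin 7 with these eight edges is connected. Then: (a) the pair partition M0 with blocks {1,2}, {3,5}, {4,6}, {7,8} has minimum cost (namely 12) among all pair partitions of Fin 8; (b) every second-phase partition of the blocks of M0 has induced cost at least 10; and (c) the minimum cost over all quad partitions is OPT = 8 (attained by the quads {1,2,3,4} and {5,6,7,8}). Hence the two-phase matching algorithm can output a solution of cost 10 = (5/4)·OPT on this instance of PQ(#1=2, distinct, connected). -/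

import Mathlib

open Finset

/-- Cost of a block `B`: sum of componentwise maxima of the vectors indexed by `B`. -/
def blockCost {N n : ℕ} (v : Fin N → Fin n → ℕ) (B : Finset (Fin N)) : ℕ :=
  ∑ j : Fin n, B.sup fun i => v i j

/-- Cost of a partition of `Fin N`: sum of the costs of its blocks. -/
def partCost {N n : ℕ} (v : Fin N → Fin n → ℕ)
    (P : Finpartition (univ : Finset (Fin N))) : ℕ :=
  ∑ b ∈ P.parts, blockCost v b

/-- A pair partition: every block has size 2. -/
def IsPairPartition {N : ℕ} (P : Finpartition (univ : Finset (Fin N))) : Prop :=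
  ∀ b ∈ P.parts, b.card = 2

/-- A quad partition: every block has size 4. -/
def IsQuadPartition {N : ℕ} (P : Finpartition (univ : Finset (Fin N))) : Prop :=
  ∀ b ∈ P.parts, b.card = 4

/-- A second-phase partition: a partition of the blocks of `M` into pairs of blocks. -/
def IsSecondPhase {N : ℕ} (M : Finpartition (univ : Finset (Fin N)))
    (S : Finpartition M.parts) : Prop :=
  ∀ q ∈ S.parts, q.card = 2

/-- Induced cost of a second-phase partition: cost of the quad partition whose blocks
are the unions of the paired blocks. -/
def inducedCost {N n : ℕ} (v : Fin N → Fin n → ℕ)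
    (M : Finpartition (univ : Finset (Fin N))) (S : Finpartition M.parts) : ℕ :=
  ∑ q ∈ S.parts, blockCost v (q.sup id)

/-- The simple graph on the components `Fin n` whose edges are the supports of the
vectors `v i`. -/
def vecGraph {N n : ℕ} (v : Fin N → Fin n → ℕ) : SimpleGraph (Fin n) where
  Adj a b := a ≠ b ∧ ∃ i, v i a = 1 ∧ v i b = 1
  symm := by
    constructor
    rintro a b ⟨hab, i, ha, hb⟩
    exact ⟨hab.symm, i, hb, ha⟩
  loopless := by
    constructor
    rintro a ⟨h, -⟩
    exact h rfl

/-- The eight vectors of the bad instance of PQ(#1=2, distinct, connected);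
supports (1-indexed): {1,2}, {1,3}, {2,4}, {3,4}, {4,5}, {4,6}, {5,7}, {6,7}. -/
def badVec6 : Fin 8 → Fin 7 → ℕ :=
  ![![1, 1, 0, 0, 0, 0, 0], ![1, 0, 1, 0, 0, 0, 0], ![0, 1, 0, 1, 0, 0, 0],
    ![0, 0, 1, 1, 0, 0, 0], ![0, 0, 0, 1, 1, 0, 0], ![0, 0, 0, 1, 0, 1, 0],
    ![0, 0, 0, 0, 1, 0, 1], ![0, 0, 0, 0, 0, 1, 1]]

/-! Every vector has exactly two ones and the vectors are distinct, so any two of them have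
at least three ones between them, and any four at least four (a triangle has only three edges);
moreover, the union of any two blocks of `M0` covers five components. These per-block bounds
are finite checks. A partition of the eight vectors into blocks of size `m` has `8 / m` blocks,
so summing the bounds gives `4 · 3 = 12`, `2 · 5 = 10` and `2 · 4 = 8`. -/

namespace Finpartition

variable {α : Type*} [DecidableEq α] {s : Finset α}

theorem card_mul_le_mul_sum_parts (P : Finpartition s) {m c : ℕ} {f : Finset α → ℕ}
    (hm : ∀ b ∈ P.parts, b.card = m) (hf : ∀ b ∈ P.parts, c ≤ f b) :
    s.card * c ≤ m * ∑ b ∈ P.parts, f b := by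
  have hs : s.card = m * P.parts.card := by
    rw [← P.sum_card_parts, sum_congr rfl hm, sum_const, smul_eq_mul, mul_comm]
  rw [hs, mul_assoc]
  exact Nat.mul_le_mul_left m (by simpa using card_nsmul_le_sum P.parts f c hf)

end Finpartition

instance {N n : ℕ} (v : Fin N → Fin n → ℕ) : DecidableRel (vecGraph v).Adj :=
  fun a b => inferInstanceAs (Decidable (a ≠ b ∧ ∃ i, v i a = 1 ∧ v i b = 1))

theorem badVec6_injective : Function.Injective badVec6 := by decide

theorem vecGraph_badVec6_connected : (vecGraph badVec6).Connected := by decide +kernel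

theorem three_le_blockCost_badVec6 (B : Finset (Fin 8)) (hB : B.card = 2) :
    3 ≤ blockCost badVec6 B := by
  revert B; decide +kernel

theorem four_le_blockCost_badVec6 (B : Finset (Fin 8)) (hB : B.card = 4) :
    4 ≤ blockCost badVec6 B := by
  revert B; decide +kernel

set_option maxRecDepth 4000 in
theorem five_le_blockCost_union_badVec6 :
    ∀ b ∈ ({{0, 1}, {2, 4}, {3, 5}, {6, 7}} : Finset (Finset (Fin 8))),
    ∀ b' ∈ ({{0, 1}, {2, 4}, {3, 5}, {6, 7}} : Finset (Finset (Fin 8))),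
    b ≠ b' → 5 ≤ blockCost badVec6 (b ∪ b') := by
  decide

def optQuadPartition : Finpartition (univ : Finset (Fin 8)) where
  parts := {{0, 1, 2, 3}, {4, 5, 6, 7}}
  supIndep := by decide
  sup_parts := by decide
  bot_notMem := by decide

theorem five_le_blockCost_sup_of_isSecondPhase (M0 : Finpartition (univ : Finset (Fin 8)))
    (hM0 : M0.parts = {({0, 1} : Finset (Fin 8)), {2, 4}, {3, 5}, {6, 7}})
    (S : Finpartition M0.parts) (hS : IsSecondPhase M0 S) :
    ∀ q ∈ S.parts, 5 ≤ blockCost badVec6 (q.sup id) := by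
  intro q hq
  obtain ⟨b, b', hne, rfl⟩ := card_eq_two.mp (hS q hq)
  have hsub : {b, b'} ⊆ M0.parts := S.le hq
  rw [hM0, insert_subset_iff, singleton_subset_iff] at hsub
  simpa using five_le_blockCost_union_badVec6 b hsub.1 b' hsub.2 hne

/-- On the instance `badVec6` (eight pairwise distinct two-ones vectors whose induced
graph is connected), the first-phase matching with blocks {1,2}, {3,5}, {4,6}, {7,8}
(0-indexed: {0,1}, {2,4}, {3,5}, {6,7}) is a minimum-cost pair partition of cost 12,
every second-phase partition of its blocks has induced cost at least 10, and the
optimum quad-partition cost is 8, attained by the quads {1,2,3,4} and {5,6,7,8}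
(0-indexed: {0,1,2,3} and {4,5,6,7}). -/
theorem pq2dc_lb_instance (M0 : Finpartition (univ : Finset (Fin 8)))
    (hM0 : M0.parts = {({0, 1} : Finset (Fin 8)), {2, 4}, {3, 5}, {6, 7}}) :
    Function.Injective badVec6 ∧ (vecGraph badVec6).Connected ∧
    IsPairPartition M0 ∧ partCost badVec6 M0 = 12 ∧
    (∀ M' : Finpartition (univ : Finset (Fin 8)),
      IsPairPartition M' → partCost badVec6 M0 ≤ partCost badVec6 M') ∧
    (∀ S : Finpartition M0.parts, IsSecondPhase M0 S → 10 ≤ inducedCost badVec6 M0 S) ∧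
    (∃ Q : Finpartition (univ : Finset (Fin 8)), IsQuadPartition Q ∧
      Q.parts = {({0, 1, 2, 3} : Finset (Fin 8)), {4, 5, 6, 7}} ∧
      partCost badVec6 Q = 8) ∧
    (∀ Q : Finpartition (univ : Finset (Fin 8)),
      IsQuadPartition Q → 8 ≤ partCost badVec6 Q) := by
  have hM0cost : partCost badVec6 M0 = 12 := by
    rw [partCost, hM0]; decide
  refine ⟨badVec6_injective, vecGraph_badVec6_connected, ?pair, hM0cost, ?pairOpt,
    ?secondPhase, ⟨optQuadPartition, ?quad, rfl, by decide +kernel⟩, ?quadOpt⟩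
  case pair => rw [IsPairPartition, hM0]; decide +kernel
  case pairOpt =>
    intro M' hM'
    have hbound := M'.card_mul_le_mul_sum_parts hM' fun b hb ↦
      three_le_blockCost_badVec6 b (hM' b hb)
    simp only [card_univ, Fintype.card_fin] at hbound
    rw [hM0cost, partCost]; omega
  case secondPhase =>
    intro S hS
    have hbound := S.card_mul_le_mul_sum_parts hS
      (five_le_blockCost_sup_of_isSecondPhase M0 hM0 S hS)
    have hcard : M0.parts.card = 4 := by rw [hM0]; decide +kernel
    rw [hcard] at hbound
    rw [inducedCost]; omega
  case quad => show ∀ b ∈ optQuadPartition.parts, b.card = 4; decide +kernel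
  case quadOpt =>
    intro Q hQ
    have hbound := Q.card_mul_le_mul_sum_parts hQ fun b hb ↦
      four_le_blockCost_badVec6 b (hQ b hb)
    simp only [card_univ, Fintype.card_fin] at hbound
    rw [partCost]; omega
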